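/- Let b(τ) be a holomorphic function on ℍ and define, for each weight k, the operator D_k = 2b∂_τ + kb′ acting on holomorphic functions. Then for all holomorphic f, g and integers k, ℓ, N ≥ 0: D_{k+ℓ}^N(fg) = Σ_{r+s=N} (N choose r) D_k^r(f) · D_ℓ^s(g). Consequently, exp(D_{k+ℓ})(fg) = exp(D_k)(f) · exp(D_ℓ)(g) as formal exponentials. -/

import Mathlib

open MeasureTheory

/-- For a fixed holomorphic function `b`, the weight-`k` operator `D_k f = 2b f' + k b' f`. -/
noncomputable def Dop (b : ℂ → ℂ) (k : ℤ) (f : ℂ → ℂ) : ℂ → ℂ :=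
  fun τ => 2 * b τ * deriv f τ + (k : ℂ) * deriv b τ * f τ

open Finset

private lemma isOpenU : IsOpen {z : ℂ | 0 < z.im} :=
  isOpen_lt continuous_const Complex.continuous_im

private lemma Dop_analytic {b f : ℂ → ℂ}
    (hb : AnalyticOnNhd ℂ b {z : ℂ | 0 < z.im})
    (hf : AnalyticOnNhd ℂ f {z : ℂ | 0 < z.im}) (k : ℤ) :
    AnalyticOnNhd ℂ (Dop b k f) {z : ℂ | 0 < z.im} := by
  intro z hz
  exact ((analyticAt_const.mul (hb z hz)).mul (hf.deriv z hz)).add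
    ((analyticAt_const.mul (hb.deriv z hz)).mul (hf z hz))

private lemma Dop_iter_analytic {b f : ℂ → ℂ}
    (hb : AnalyticOnNhd ℂ b {z : ℂ | 0 < z.im})
    (hf : AnalyticOnNhd ℂ f {z : ℂ | 0 < z.im}) (k : ℤ) (n : ℕ) :
    AnalyticOnNhd ℂ ((Dop b k)^[n] f) {z : ℂ | 0 < z.im} := by
  induction n with
  | zero => simpa using hf
  | succ n ih => rw [Function.iterate_succ_apply']; exact Dop_analytic hb ih k

private lemma Dop_congr {b F G : ℂ → ℂ} {k : ℤ} {τ : ℂ} (h : F =ᶠ[nhds τ] G) :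
    Dop b k F τ = Dop b k G τ := by
  simp [Dop, h.deriv_eq, h.self_of_nhds]

private lemma Dop_sum {b : ℂ → ℂ} {k : ℤ} {τ : ℂ} {ι : Type*} {s : Finset ι}
    {F : ι → ℂ → ℂ} (h : ∀ i ∈ s, DifferentiableAt ℂ (F i) τ) :
    Dop b k (fun z => ∑ i ∈ s, F i z) τ = ∑ i ∈ s, Dop b k (F i) τ := by
  simp only [Dop, deriv_fun_sum h, Finset.mul_sum]
  rw [← Finset.sum_add_distrib]

private lemma Dop_leibniz {b F G : ℂ → ℂ} {τ : ℂ} (hF : DifferentiableAt ℂ F τ)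
    (hG : DifferentiableAt ℂ G τ) (k ℓ : ℤ) :
    Dop b (k + ℓ) (fun z => F z * G z) τ = Dop b k F τ * G τ + F τ * Dop b ℓ G τ := by
  simp only [Dop, deriv_fun_mul hF hG]
  push_cast
  ring

private lemma Dop_const_mul_leibniz {b F G : ℂ → ℂ} {τ : ℂ} (c : ℂ)
    (hF : DifferentiableAt ℂ F τ) (hG : DifferentiableAt ℂ G τ) (k ℓ : ℤ) :
    Dop b (k + ℓ) (fun z => c * F z * G z) τ
      = c * Dop b k F τ * G τ + c * F τ * Dop b ℓ G τ := by
  have h1 : (fun z => c * F z * G z) = fun z => c * (F z * G z) := by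
    funext z; ring
  rw [h1]
  have h2 : Dop b (k + ℓ) (fun z => c * (F z * G z)) τ
      = c * Dop b (k + ℓ) (fun z => F z * G z) τ := by
    simp only [Dop, deriv_const_mul (d := fun z => F z * G z) c (hF.mul hG)]
    ring
  rw [h2, Dop_leibniz hF hG k ℓ]
  ring

private lemma pascal_sum (A B : ℕ → ℂ) (N : ℕ) :
    ∑ r ∈ range (N + 1), ((N.choose r : ℂ) * A (r + 1) * B (N - r)
        + (N.choose r : ℂ) * A r * B (N - r + 1))
      = ∑ r ∈ range (N + 2), ((N + 1).choose r : ℂ) * A r * B (N + 1 - r) := by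
  rw [Finset.sum_add_distrib]
  have hR : ∑ r ∈ range (N + 2), ((N + 1).choose r : ℂ) * A r * B (N + 1 - r)
      = ((N + 1).choose 0 : ℂ) * A 0 * B (N + 1)
        + ∑ r ∈ range (N + 1), ((N + 1).choose (r + 1) : ℂ) * A (r + 1) * B (N - r) := by
    rw [Finset.sum_range_succ' (fun r => ((N + 1).choose r : ℂ) * A r * B (N + 1 - r)) (N + 1)]
    simp [add_comm]
  have hL2 : ∑ r ∈ range (N + 1), (N.choose r : ℂ) * A r * B (N - r + 1)
      = ((N.choose 0 : ℂ)) * A 0 * B (N + 1)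
        + ∑ r ∈ range (N + 1), (N.choose (r + 1) : ℂ) * A (r + 1) * B (N - r) := by
    rw [Finset.sum_range_succ' (fun r => (N.choose r : ℂ) * A r * B (N - r + 1)) N]
    rw [Finset.sum_range_succ (fun r => (N.choose (r+1) : ℂ) * A (r+1) * B (N - r)) N]
    have : (N.choose (N + 1) : ℂ) = 0 := by simp [Nat.choose_eq_zero_of_lt]
    have hidx : ∀ r ∈ range N, (N.choose (r+1) : ℂ) * A (r+1) * B (N - (r+1) + 1)
        = (N.choose (r+1) : ℂ) * A (r+1) * B (N - r) := by
      intro r hr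
      rw [Finset.mem_range] at hr
      congr 2
      omega
    rw [Finset.sum_congr rfl hidx]
    rw [this]
    simp only [Nat.sub_zero]
    ring
  rw [hR, hL2]
  have hp : ∀ r ∈ range (N + 1), ((N + 1).choose (r + 1) : ℂ) * A (r + 1) * B (N - r)
      = (N.choose r : ℂ) * A (r + 1) * B (N - r) + (N.choose (r + 1) : ℂ) * A (r + 1) * B (N - r) := by
    intro r _
    rw [Nat.choose_succ_succ]
    push_cast
    ring
  rw [Finset.sum_congr rfl hp, Finset.sum_add_distrib]
  simp
  ring

/-- For all `N`: `D_{k+ℓ}^N(fg) = Σ_{r+s=N} (N choose r) D_k^r(f)·D_ℓ^s(g)`, and consequently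
`exp(D_{k+ℓ})(fg) = exp(D_k)(f)·exp(D_ℓ)(g)` as formal exponentials (coefficientwise in a
formal deformation parameter, encoded as an identity of formal power series). -/
theorem Dop_binomial_and_exp (b f g : ℂ → ℂ)
    (hb : DifferentiableOn ℂ b {z : ℂ | 0 < z.im})
    (hf : DifferentiableOn ℂ f {z : ℂ | 0 < z.im})
    (hg : DifferentiableOn ℂ g {z : ℂ | 0 < z.im})
    (k ℓ : ℤ) :
    (∀ N : ℕ, ∀ τ : ℂ, 0 < τ.im →
      (Dop b (k + ℓ))^[N] (fun z => f z * g z) τ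
        = ∑ r ∈ Finset.range (N + 1),
            (N.choose r : ℂ) * ((Dop b k)^[r] f τ) * ((Dop b ℓ)^[N - r] g τ)) ∧
    (∀ τ : ℂ, 0 < τ.im →
      (PowerSeries.mk fun N =>
          ((N.factorial : ℂ))⁻¹ * (Dop b (k + ℓ))^[N] (fun z => f z * g z) τ)
        = (PowerSeries.mk fun N => ((N.factorial : ℂ))⁻¹ * (Dop b k)^[N] f τ)
          * (PowerSeries.mk fun N => ((N.factorial : ℂ))⁻¹ * (Dop b ℓ)^[N] g τ)) := by
  have hba : AnalyticOnNhd ℂ b {z : ℂ | 0 < z.im} := hb.analyticOnNhd isOpenU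
  have hfa : AnalyticOnNhd ℂ f {z : ℂ | 0 < z.im} := hf.analyticOnNhd isOpenU
  have hga : AnalyticOnNhd ℂ g {z : ℂ | 0 < z.im} := hg.analyticOnNhd isOpenU
  have hFd : ∀ (r : ℕ) (τ : ℂ), 0 < τ.im → DifferentiableAt ℂ ((Dop b k)^[r] f) τ :=
    fun r τ hτ => (Dop_iter_analytic hba hfa k r τ hτ).differentiableAt
  have hGd : ∀ (r : ℕ) (τ : ℂ), 0 < τ.im → DifferentiableAt ℂ ((Dop b ℓ)^[r] g) τ :=
    fun r τ hτ => (Dop_iter_analytic hba hga ℓ r τ hτ).differentiableAt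
  have main : ∀ N : ℕ, ∀ τ : ℂ, 0 < τ.im →
      (Dop b (k + ℓ))^[N] (fun z => f z * g z) τ
        = ∑ r ∈ Finset.range (N + 1),
            (N.choose r : ℂ) * ((Dop b k)^[r] f τ) * ((Dop b ℓ)^[N - r] g τ) := by
    intro N
    induction N with
    | zero => intro τ hτ; simp
    | succ N ih =>
      intro τ hτ
      rw [Function.iterate_succ_apply']
      have hev : ((Dop b (k + ℓ))^[N] (fun z => f z * g z)) =ᶠ[nhds τ]
          (fun z => ∑ r ∈ Finset.range (N + 1),
            (N.choose r : ℂ) * ((Dop b k)^[r] f z) * ((Dop b ℓ)^[N - r] g z)) := by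
        filter_upwards [isOpenU.mem_nhds hτ] with z hz
        exact ih z hz
      rw [Dop_congr hev]
      rw [Dop_sum (fun r hr => by
        exact ((differentiableAt_const _).mul (hFd r τ hτ)).mul (hGd (N - r) τ hτ))]
      have hterm : ∀ r ∈ Finset.range (N + 1),
          Dop b (k + ℓ) (fun z => (N.choose r : ℂ) * ((Dop b k)^[r] f z) * ((Dop b ℓ)^[N - r] g z)) τ
            = (N.choose r : ℂ) * ((Dop b k)^[r + 1] f τ) * ((Dop b ℓ)^[N - r] g τ)
              + (N.choose r : ℂ) * ((Dop b k)^[r] f τ) * ((Dop b ℓ)^[N - r + 1] g τ) := by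
        intro r _
        rw [Dop_const_mul_leibniz (N.choose r : ℂ) (hFd r τ hτ) (hGd (N - r) τ hτ) k ℓ]
        rw [Function.iterate_succ_apply', Function.iterate_succ_apply']
      rw [Finset.sum_congr rfl hterm]
      have := pascal_sum (fun r => (Dop b k)^[r] f τ) (fun s => (Dop b ℓ)^[s] g τ) N
      simpa using this
  refine ⟨main, ?_⟩
  intro τ hτ
  ext n
  rw [PowerSeries.coeff_mul]
  simp only [PowerSeries.coeff_mk]
  rw [Finset.Nat.sum_antidiagonal_eq_sum_range_succ_mk]
  rw [main n τ hτ, Finset.mul_sum]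
  refine Finset.sum_congr rfl ?_
  intro r hr
  rw [Finset.mem_range] at hr
  have hrn : r ≤ n := Nat.lt_succ_iff.mp hr
  have hfac : (n.choose r : ℂ) * (r.factorial : ℂ) * ((n - r).factorial : ℂ) = (n.factorial : ℂ) := by
    exact_mod_cast congrArg (Nat.cast : ℕ → ℂ) (Nat.choose_mul_factorial_mul_factorial hrn)
  have h1 : (r.factorial : ℂ) ≠ 0 := Nat.cast_ne_zero.mpr (Nat.factorial_ne_zero r)
  have h2 : ((n - r).factorial : ℂ) ≠ 0 := Nat.cast_ne_zero.mpr (Nat.factorial_ne_zero (n - r))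
  have h3 : (n.factorial : ℂ) ≠ 0 := Nat.cast_ne_zero.mpr (Nat.factorial_ne_zero n)
  field_simp
  linear_combination ((Dop b k)^[r] f τ) * ((Dop b ℓ)^[n - r] g τ) * hfac
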